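/- Every step of s(t) is the T-entry of a box of D, and the sets of steps s_S(t), for t ∈ [1,n], are pairwise disjoint. -/

import Mathlib

open scoped Classical

/-- height of column `j` of the diagram (columns numbered from 1). -/
def hgt (c : List ℕ) (j : ℕ) : ℕ := c.getD (j - 1) 0

/-- number of boxes in the columns strictly to the left of column `j`. -/
def off (c : List ℕ) (j : ℕ) : ℕ := (c.take (j - 1)).sum

/-- `(i, j)` (row `i`, column `j`) is a box of the diagram `D`. -/
def IsBox (c : List ℕ) (i j : ℕ) : Prop :=
  1 ≤ j ∧ j ≤ c.length ∧ 1 ≤ i ∧ i ≤ hgt c j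

/-- the entry of the box `(i, j)` in the tableau `T`. -/
def Tentry (c : List ℕ) (i j : ℕ) : ℕ := off c j + i

/-- the column of the box of `D` carrying entry `m` in `T`. -/
noncomputable def colOf (c : List ℕ) (m : ℕ) : ℕ := sInf {j | m ≤ (c.take j).sum}

/-- the row of the box of `D` carrying entry `m` in `T`. -/
noncomputable def rowOf (c : List ℕ) (m : ℕ) : ℕ := m - off c (colOf c m)

/-- the total order `≼` on entries: increasing down columns, then from right to left. -/
def ple (c : List ℕ) (a b : ℕ) : Prop :=
  colOf c b < colOf c a ∨ (colOf c a = colOf c b ∧ a ≤ b)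

/-- the strict version of `≼`. -/
def plt (c : List ℕ) (a b : ℕ) : Prop :=
  colOf c b < colOf c a ∨ (colOf c a = colOf c b ∧ a < b)

/-- column `j` has a left neighbour in `D`. -/
def HasLeftNb (c : List ℕ) (j : ℕ) : Prop :=
  ∃ i, 1 ≤ i ∧ i < j ∧ hgt c i = hgt c j ∧
    ∀ i', i < i' → i' < j → hgt c i' ≠ hgt c j

/-- the `j`-th column of the tableau `T`, rows to optional entries. -/
def Tcol (c : List ℕ) (j : ℕ) : ℕ → Option ℕ := fun i =>
  if 1 ≤ i ∧ i ≤ hgt c j then some (Tentry c i j) else none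

/-- one step of the propagation rule building `T(∞)`: the entry (if any) in row `t`
of column `j - 1` of `T(∞)` (given by `prev`) is propagated into the partially
built column `j` (given by `cur`). -/
noncomputable def propStep (c : List ℕ) (j : ℕ) (prev : ℕ → Option ℕ)
    (cur : ℕ → Option ℕ) (t : ℕ) : ℕ → Option ℕ :=
  match prev t with
  | none => cur
  | some l =>
    if hgt c j = t then
      if HasLeftNb c j ∧ cur (t + 1) = none then
        Function.update cur (t + 1) (some l)
      else cur
    else
      if cur t = none then Function.update cur t (some l) else cur

/-- the `j`-th column of the composition tableau `T(∞)`. -/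
noncomputable def TinfCol (c : List ℕ) : ℕ → ℕ → Option ℕ
  | 0 => fun _ => none
  | 1 => Tcol c 1
  | j + 2 =>
      (List.range (c.sum + 2)).foldl
        (propStep c (j + 2) (TinfCol c (j + 1))) (Tcol c (j + 2))

/-- labels of lines: `1` or `∗`. -/
inductive Lab : Type
  | one : Lab
  | star : Lab
deriving DecidableEq

/-- maximal height among the columns `1, …, j - 1`. -/
def maxHgt (c : List ℕ) (j : ℕ) : ℕ := (c.take (j - 1)).foldr max 0

/-- the maximal column height of the diagram `D`. -/
def maxH (c : List ℕ) : ℕ := c.foldr max 0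

/-- `LineB c a i j lab` : the line family `ℓ(D)` contains a line labelled `lab`
whose left end-point is the box of `D` carrying entry `a` in `T` and whose right
end-point is the box `(i, j)` (row `i` of column `C_j`). -/
def LineB (c : List ℕ) (a i j : ℕ) (lab : Lab) : Prop :=
  2 ≤ j ∧ j ≤ c.length ∧ 1 ≤ i ∧
    (match lab with
     | Lab.one =>
         (maxHgt c j < hgt c j ∧ i ≤ maxHgt c j + 1 ∧ TinfCol c (j - 1) i = some a)
       ∨ (hgt c j ≤ maxHgt c j ∧ i + 1 ≤ hgt c j ∧ TinfCol c (j - 1) i = some a)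
       ∨ (hgt c j ≤ maxHgt c j ∧ i = hgt c j ∧
           ¬(∃ j', 1 ≤ j' ∧ j' < j ∧ hgt c j' = hgt c j) ∧
           TinfCol c (j - 1) i = some a)
       ∨ (hgt c j ≤ maxHgt c j ∧ i = hgt c j ∧
           (∃ j', 1 ≤ j' ∧ j' < j ∧ hgt c j' = hgt c j) ∧
           TinfCol c (j - 1) (i + 1) = some a)
     | Lab.star =>
         hgt c j ≤ maxHgt c j ∧ i = hgt c j ∧
           (∃ j', 1 ≤ j' ∧ j' < j ∧ hgt c j' = hgt c j) ∧
           TinfCol c (j - 1) i = some a)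

/-- `LineE c a b lab` : `ℓ(D)` contains a line labelled `lab` joining the box of `D`
carrying entry `a` in `T` (on the left) to the box carrying entry `b` (on the right). -/
def LineE (c : List ℕ) (a b : ℕ) (lab : Lab) : Prop :=
  ∃ i j, LineB c a i j lab ∧ b = Tentry c i j

/-- the box `(i, j)` of `D` is right extremal relative to `ℓ(D)`. -/
def RExt (c : List ℕ) (i j : ℕ) : Prop :=
  IsBox c i j ∧ ∀ i' j', ¬ LineB c (Tentry c i j) i' j' Lab.one

/-- `c` is a composition of `n`. -/
def IsComposition (c : List ℕ) (n : ℕ) : Prop :=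
  c.sum = n ∧ ∀ x ∈ c, 0 < x

/-- the set `s_S(t)` of steps of the profile staircase `s(t)`: whenever the entry `t`
descends one row on entering column `j` (a column of height `u` with `t` in row `u`
of column `j - 1` of `T(∞)` and in row `u + 1` of column `j`), the `T`-entry of the
box `R_u ∩ C_j` directly above is a step of `s(t)`. -/
def StepsOf (c : List ℕ) (t : ℕ) : Set ℕ :=
  {s | ∃ j, 2 ≤ j ∧ j ≤ c.length ∧
      TinfCol c (j - 1) (hgt c j) = some t ∧
      TinfCol c j (hgt c j + 1) = some t ∧
      s = Tentry c (hgt c j) j}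

section Steps

variable {c : List ℕ}

lemma hgt_pos (hpos : ∀ x ∈ c, 0 < x) {j : ℕ} (hj : 1 ≤ j) (hjl : j ≤ c.length) :
    0 < hgt c j := by
  have hlt : j - 1 < c.length := by omega
  rw [hgt, List.getD_eq_getElem c 0 hlt]
  exact hpos _ (List.getElem_mem hlt)

lemma tentry_hgt_eq_sum_take {j : ℕ} (hj : 1 ≤ j) (hjl : j ≤ c.length) :
    Tentry c (hgt c j) j = (c.take j).sum := by
  obtain ⟨k, rfl⟩ := Nat.exists_eq_add_of_le' hj
  have hk : k < c.length := by omega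
  rw [Tentry, off, hgt, Nat.add_sub_cancel, List.getD_eq_getElem c 0 hk,
    List.sum_take_succ c k hk]

lemma injOn_sum_take (hpos : ∀ x ∈ c, 0 < x) :
    Set.InjOn (fun j => (c.take j).sum) (Set.Iic c.length) :=
  let comp : Composition c.sum := ⟨c, hpos _, rfl⟩
  (strictMonoOn_of_lt_add_one (f := comp.sizeUpTo) Set.ordConnected_Iic fun _ _ _ ha =>
    comp.sizeUpTo_strict_mono (Nat.lt_of_succ_le ha)).injOn

lemma exists_isBox_of_mem_stepsOf (hpos : ∀ x ∈ c, 0 < x) {t s : ℕ} (hs : s ∈ StepsOf c t) :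
    ∃ i j, IsBox c i j ∧ s = Tentry c i j := by
  obtain ⟨j, hj, hjl, -, -, rfl⟩ := hs
  exact ⟨hgt c j, j, ⟨by omega, hjl, hgt_pos hpos (by omega) hjl, le_rfl⟩, rfl⟩

/-- A step is the bottom entry of its column, so it determines the column, and `t` is the
entry of `T(∞)` to its left. -/
lemma eq_of_mem_stepsOf (hpos : ∀ x ∈ c, 0 < x) {t t' s : ℕ}
    (hs : s ∈ StepsOf c t) (hs' : s ∈ StepsOf c t') : t = t' := by
  obtain ⟨j, hj, hjl, ht, -, rfl⟩ := hs
  obtain ⟨j', hj', hjl', ht', -, hs⟩ := hs'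
  rw [tentry_hgt_eq_sum_take (by omega) hjl, tentry_hgt_eq_sum_take (by omega) hjl'] at hs
  obtain rfl : j = j' := injOn_sum_take hpos hjl hjl' hs
  exact Option.some_injective _ (ht.symm.trans ht')

end Steps

theorem statement3_general (n : ℕ) (c : List ℕ) (hc : IsComposition c n) :
    (∀ t, 1 ≤ t → t ≤ n → ∀ s ∈ StepsOf c t, ∃ i j, IsBox c i j ∧ s = Tentry c i j) ∧
    (∀ t t', 1 ≤ t → t ≤ n → 1 ≤ t' → t' ≤ n → t ≠ t' →
      StepsOf c t ∩ StepsOf c t' = ∅) :=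
  ⟨fun _ _ _ _ hs => exists_isBox_of_mem_stepsOf hc.2 hs,
    fun _ _ _ _ _ _ hne => Set.eq_empty_of_forall_notMem fun _ ⟨hs, hs'⟩ =>
      hne (eq_of_mem_stepsOf hc.2 hs hs')⟩

/-- every step of `s(t)` is the `T`-entry of a box of `D`, and the sets
of steps `s_S(t)`, `t ∈ [1, n]`, are pairwise disjoint. -/
theorem statement3 (n : ℕ) (hn : 0 < n) (c : List ℕ) (hc : IsComposition c n) :
    (∀ t, 1 ≤ t → t ≤ n → ∀ s ∈ StepsOf c t, ∃ i j, IsBox c i j ∧ s = Tentry c i j) ∧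
    (∀ t t', 1 ≤ t → t ≤ n → 1 ≤ t' → t' ≤ n → t ≠ t' →
      StepsOf c t ∩ StepsOf c t' = ∅) :=
  statement3_general n c hc
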